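/- If (a_n)_{n≥k} is an infinite sequence of non-negative integers with a_{n+1} ≤ a_n + 1 for all n and sup_n a_n finite, then: (1) there exist r ≥ s such that a_n = r and a_{n+1} = s for infinitely many n; and (2) for any m with s ≤ m < m+1 ≤ r, there are infinitely many n with a_n = m and a_{n+1} = m + 1. -/

import Mathlib

/-!
A bounded sequence of naturals cannot increase strictly from some point on, so it drops
(`a (n + 1) ≤ a n`) infinitely often, and by pigeonhole on the finitely many value pairs one
drop `(r, s)` recurs infinitely often. Between two occurrences `n < n'` of it the sequence
climbs from `s = a (n + 1)` back to `r = a n'` in steps of at most one, so it passes every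
step `(m, m + 1)` with `s ≤ m < r` in between.
-/

open Set

theorem Set.Infinite.exists_infinite_fiber_of_mapsTo {α β : Type*} {s : Set α} {t : Set β}
    {f : α → β} (hs : s.Infinite) (hf : MapsTo f s t) (ht : t.Finite) :
    ∃ b ∈ t, (s ∩ f ⁻¹' {b}).Infinite := by
  by_contra! h
  refine hs ((ht.biUnion h).subset fun x hx => ?_)
  exact mem_biUnion (hf hx) ⟨hx, rfl⟩

theorem infinite_setOf_succ_le_of_le {a : ℕ → ℕ} {M : ℕ} (hb : ∀ n, a n ≤ M) :
    {n | a (n + 1) ≤ a n}.Infinite := by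
  intro hfin
  obtain ⟨N, hN⟩ := hfin.bddAbove
  have hmono : StrictMono fun k => a (N + 1 + k) := strictMono_nat_of_lt_succ fun k => by
    by_contra! hle
    have := hN (show N + 1 + k ∈ {n | a (n + 1) ≤ a n} from hle)
    omega
  have : M + 1 ≤ a (N + 1 + (M + 1)) := hmono.id_le (M + 1)
  have := hb (N + 1 + (M + 1))
  omega

theorem exists_infinite_setOf_drop {a : ℕ → ℕ} {M : ℕ} (hb : ∀ n, a n ≤ M) :
    ∃ r s, s ≤ r ∧ {n | a n = r ∧ a (n + 1) = s}.Infinite := by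
  have hpairs : {p : ℕ × ℕ | p ∈ Iic M ×ˢ Iic M ∧ p.2 ≤ p.1}.Finite :=
    ((finite_Iic M).prod (finite_Iic M)).subset fun _ hp => hp.1
  have hmaps : MapsTo (fun n => (a n, a (n + 1))) {n | a (n + 1) ≤ a n}
      {p : ℕ × ℕ | p ∈ Iic M ×ˢ Iic M ∧ p.2 ≤ p.1} :=
    fun n hn => ⟨⟨hb n, hb (n + 1)⟩, hn⟩
  obtain ⟨⟨r, s⟩, ⟨-, hsr⟩, hinf⟩ :=
    (infinite_setOf_succ_le_of_le hb).exists_infinite_fiber_of_mapsTo hmaps hpairs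
  exact ⟨r, s, hsr, hinf.mono fun n hn => Prod.mk.inj hn.2⟩

theorem exists_upcrossing_of_le_of_lt {a : ℕ → ℕ} (hrd : ∀ n, a (n + 1) ≤ a n + 1)
    {m i j : ℕ} (hij : i ≤ j) (hi : a i ≤ m) (hj : m < a j) :
    ∃ k, i ≤ k ∧ a k = m ∧ a (k + 1) = m + 1 := by
  induction j, hij using Nat.le_induction with
  | base => omega
  | succ j hij ih =>
    by_cases hjm : a j ≤ m
    · have := hrd j
      exact ⟨j, hij, by omega, by omega⟩
    · exact ih (by omega)

/-- A bounded rise-and-drop sequence of non-negative integers makes the same drop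
`(r, s)` (with `s ≤ r`) infinitely often, and then rises past every step `(m, m+1)`
with `s ≤ m < m+1 ≤ r` infinitely often. -/
theorem stmt4 (a : ℕ → ℕ) (hrd : ∀ n, a (n + 1) ≤ a n + 1)
    (M : ℕ) (hb : ∀ n, a n ≤ M) :
    ∃ r s, s ≤ r ∧ {n | a n = r ∧ a (n + 1) = s}.Infinite ∧
      ∀ m, s ≤ m → m + 1 ≤ r → {n | a n = m ∧ a (n + 1) = m + 1}.Infinite := by
  obtain ⟨r, s, hsr, hdrop⟩ := exists_infinite_setOf_drop hb
  refine ⟨r, s, hsr, hdrop, fun m hsm hmr => infinite_of_forall_exists_gt fun N => ?_⟩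
  obtain ⟨n, ⟨-, hns⟩, hNn⟩ := hdrop.exists_gt N
  obtain ⟨n', ⟨hn'r, -⟩, hnn'⟩ := hdrop.exists_gt n
  obtain ⟨k, hnk, hrise⟩ := exists_upcrossing_of_le_of_lt hrd (m := m) (show n + 1 ≤ n' by omega)
    (by omega) (by omega)
  exact ⟨k, hrise, by omega⟩
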